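/- arXiv:2106.07888 — 3 statements merged into one kernel-verified Lean document; each statement's English description precedes it below -/
import Mathlib

section
/- Let a, b be real numbers with b² - a² = 1 and ab ≠ 0, and let A be the 2×2 real matrix (1/(a²+b²))·[[2ab, 1], [-1, 2ab]]. Then trace(A²) + 2 = 16b²(b²-1)/(a²+b²)², which is strictly positive; hence trace(A²) + 2 ≠ 0. -/
theorem stmt_5 (a b : ℝ) (hab : b ^ 2 - a ^ 2 = 1) (h : a * b ≠ 0)
    (A : Matrix (Fin 2) (Fin 2) ℝ)
    (hA : A = (a ^ 2 + b ^ 2)⁻¹ • !![2 * a * b, 1; -1, 2 * a * b]) :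
    Matrix.trace (A * A) + 2 = 16 * b ^ 2 * (b ^ 2 - 1) / (a ^ 2 + b ^ 2) ^ 2 ∧
    0 < 16 * b ^ 2 * (b ^ 2 - 1) / (a ^ 2 + b ^ 2) ^ 2 ∧
    Matrix.trace (A * A) + 2 ≠ 0 := by
  have ha : a ≠ 0 := fun h0 => h (by simp [h0])
  have hb : b ≠ 0 := fun h0 => h (by simp [h0])
  have hs : a ^ 2 + b ^ 2 ≠ 0 := by positivity
  have hb2 : b ^ 2 - 1 = a ^ 2 := by linarith
  have htr : Matrix.trace (A * A) + 2 = 16 * b ^ 2 * (b ^ 2 - 1) / (a ^ 2 + b ^ 2) ^ 2 := by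
    subst hA
    simp [Matrix.trace_fin_two, Matrix.mul_fin_two, Matrix.smul_mul, Matrix.mul_smul]
    field_simp
    ring_nf
    linear_combination (-14*b^2 - 2*a^2 + 2) * hab
  have hpos : 0 < 16 * b ^ 2 * (b ^ 2 - 1) / (a ^ 2 + b ^ 2) ^ 2 := by
    rw [hb2]
    positivity
  exact ⟨htr, hpos, by rw [htr]; exact ne_of_gt hpos⟩
end

section
/- Let a, b be real numbers with b² - a² = 1, ab ≠ 0, and let A = (1/(a²+b²))·[[2ab, 1], [-1, 2ab]]. For an integer r ≥ 3, the equation (trace A²)² + 2·(trace A²) + (r-2)·(trace A)² = 0 is equivalent to 16b²(b²-1)·((a²+b²)²·r - 4) = 0, hence to (a²+b²)² = 4/r. Since a²+b² > 1, this has a solution if and only if r = 3, in which case a² = √3/3 - 1/2 and b² = √3/3 + 1/2. -/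
set_option maxHeartbeats 1000000


theorem stmt_7 (a b : ℝ) (hab : b ^ 2 - a ^ 2 = 1) (h : a * b ≠ 0)
    (A : Matrix (Fin 2) (Fin 2) ℝ)
    (hA : A = (a ^ 2 + b ^ 2)⁻¹ • !![2 * a * b, 1; -1, 2 * a * b])
    (r : ℕ) (hr : 3 ≤ r) :
    ((Matrix.trace (A * A)) ^ 2 + 2 * Matrix.trace (A * A) +
        ((r : ℝ) - 2) * (Matrix.trace A) ^ 2 = 0 ↔
      16 * b ^ 2 * (b ^ 2 - 1) * ((a ^ 2 + b ^ 2) ^ 2 * (r : ℝ) - 4) = 0) ∧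
    ((Matrix.trace (A * A)) ^ 2 + 2 * Matrix.trace (A * A) +
        ((r : ℝ) - 2) * (Matrix.trace A) ^ 2 = 0 ↔
      (a ^ 2 + b ^ 2) ^ 2 = 4 / (r : ℝ)) ∧
    ((Matrix.trace (A * A)) ^ 2 + 2 * Matrix.trace (A * A) +
        ((r : ℝ) - 2) * (Matrix.trace A) ^ 2 = 0 ↔
      (r = 3 ∧ a ^ 2 = Real.sqrt 3 / 3 - 1 / 2 ∧ b ^ 2 = Real.sqrt 3 / 3 + 1 / 2)) := by
  have ha : a ≠ 0 := fun h0 => h (by simp [h0])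
  have hb : b ≠ 0 := fun h0 => h (by simp [h0])
  have ha2 : 0 < a ^ 2 := by positivity
  have hb2 : 0 < b ^ 2 := by positivity
  have hs1 : 1 < a ^ 2 + b ^ 2 := by nlinarith
  have hs0 : a ^ 2 + b ^ 2 ≠ 0 := by linarith
  have hrR : (3 : ℝ) ≤ (r : ℝ) := by exact_mod_cast hr
  have htr : Matrix.trace A = 4 * a * b / (a ^ 2 + b ^ 2) := by
    subst hA
    simp [Matrix.trace_fin_two]
    field_simp
    ring
  have htr2 : Matrix.trace (A * A) = (8 * a ^ 2 * b ^ 2 - 2) / (a ^ 2 + b ^ 2) ^ 2 := by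
    subst hA
    simp [Matrix.trace_fin_two, Matrix.mul_apply, Fin.sum_univ_two]
    field_simp
    ring
  have e1 : 8 * a ^ 2 * b ^ 2 - 2 = 2 * (a ^ 2 + b ^ 2) ^ 2 - 4 := by
    linear_combination (-2 * (b ^ 2 - a ^ 2) - 2) * hab
  have e2 : 16 * b ^ 2 * (b ^ 2 - 1) = 4 * ((a ^ 2 + b ^ 2) ^ 2 - 1) := by
    linear_combination (12 * b ^ 2 + 4 * a ^ 2 - 4) * hab
  have e3 : (4 * a * b / (a ^ 2 + b ^ 2)) ^ 2 =
      4 * ((a ^ 2 + b ^ 2) ^ 2 - 1) / (a ^ 2 + b ^ 2) ^ 2 := by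
    rw [div_pow]
    congr 1
    linear_combination (-4 * (b ^ 2 - a ^ 2) - 4) * hab
  have key : (Matrix.trace (A * A)) ^ 2 + 2 * Matrix.trace (A * A) +
      ((r : ℝ) - 2) * (Matrix.trace A) ^ 2 =
      (16 * b ^ 2 * (b ^ 2 - 1) * ((a ^ 2 + b ^ 2) ^ 2 * (r : ℝ) - 4)) /
        (a ^ 2 + b ^ 2) ^ 4 := by
    rw [htr, htr2, e1, e2, e3]
    field_simp
    ring
  have iff1 : (Matrix.trace (A * A)) ^ 2 + 2 * Matrix.trace (A * A) +
      ((r : ℝ) - 2) * (Matrix.trace A) ^ 2 = 0 ↔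
      16 * b ^ 2 * (b ^ 2 - 1) * ((a ^ 2 + b ^ 2) ^ 2 * (r : ℝ) - 4) = 0 := by
    rw [key, div_eq_zero_iff]
    constructor
    · rintro (h1 | h1)
      · exact h1
      · exact absurd h1 (by positivity)
    · intro h1; exact Or.inl h1
  have hbb : b ^ 2 - 1 = a ^ 2 := by linarith
  have iff2 : (Matrix.trace (A * A)) ^ 2 + 2 * Matrix.trace (A * A) +
      ((r : ℝ) - 2) * (Matrix.trace A) ^ 2 = 0 ↔
      (a ^ 2 + b ^ 2) ^ 2 = 4 / (r : ℝ) := by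
    rw [iff1]
    constructor
    · intro h1
      have h2 : (a ^ 2 + b ^ 2) ^ 2 * (r : ℝ) - 4 = 0 := by
        rcases mul_eq_zero.mp h1 with h3 | h3
        · exfalso
          rcases mul_eq_zero.mp h3 with h4 | h4
          · nlinarith
          · rw [hbb] at h4; nlinarith
        · exact h3
      field_simp
      linarith
    · intro h1
      have h2 : (a ^ 2 + b ^ 2) ^ 2 * (r : ℝ) - 4 = 0 := by
        field_simp at h1
        linarith
      rw [h2]; ring
  refine ⟨iff1, iff2, iff2.trans ?_⟩
  clear iff1 iff2 key htr htr2 e1 e2 e3 hA h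
  have hs3 : (Real.sqrt 3) ^ 2 = 3 := Real.sq_sqrt (by norm_num)
  have hs3' : (0:ℝ) < Real.sqrt 3 := Real.sqrt_pos.mpr (by norm_num)
  constructor
  · intro h1
    have hr4 : (r : ℝ) < 4 := by
      by_contra h2
      push_neg at h2
      have : 4 / (r : ℝ) ≤ 1 := by
        rw [div_le_one (by linarith)]; exact h2
      nlinarith
    have hr3 : r = 3 := by
      have : r < 4 := by exact_mod_cast hr4
      omega
    subst hr3
    push_cast at h1
    norm_num at h1
    have hzero : (a ^ 2 + b ^ 2 - 2 * Real.sqrt 3 / 3) *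
        (a ^ 2 + b ^ 2 + 2 * Real.sqrt 3 / 3) = 0 := by
      linear_combination h1 - (4 / 9) * hs3
    have hsum : a ^ 2 + b ^ 2 = 2 * Real.sqrt 3 / 3 := by
      rcases mul_eq_zero.mp hzero with h2 | h2
      · linarith
      · exfalso; nlinarith
    exact ⟨rfl, by linarith, by linarith⟩
  · rintro ⟨hr3, ha3, hb3⟩
    subst hr3
    rw [ha3, hb3]
    push_cast
    linear_combination (4 / 9) * hs3
end

section
/- Let λ be a real number and let A be the 2×2 real matrix [[λ, 0], [k, λ]] for some real k ≠ 0. For an integer r ≥ 3, with ε = 1, m = 2, c = 1, the condition (trace A²)² - m·c·(trace A²) - (r-2)·m²·c·(trace A / m)² = 0 together with trace A ≠ 0 holds if and only if λ² = r - 1. Moreover, with c = -1 instead, the corresponding condition (trace A²)² + m·(trace A²) + (r-2)·m²·(trace A / m)² = 0 with trace A ≠ 0 has no solution. -/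
theorem stmt_8 (l k : ℝ) (hk : k ≠ 0)
    (A : Matrix (Fin 2) (Fin 2) ℝ) (hA : A = !![l, 0; k, l])
    (r : ℕ) (hr : 3 ≤ r) :
    (((Matrix.trace (A * A)) ^ 2 - 2 * 1 * Matrix.trace (A * A) -
        ((r : ℝ) - 2) * 2 ^ 2 * 1 * (Matrix.trace A / 2) ^ 2 = 0 ∧
      Matrix.trace A ≠ 0) ↔ l ^ 2 = (r : ℝ) - 1) ∧
    ¬ ((Matrix.trace (A * A)) ^ 2 + 2 * Matrix.trace (A * A) +
        ((r : ℝ) - 2) * 2 ^ 2 * (Matrix.trace A / 2) ^ 2 = 0 ∧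
      Matrix.trace A ≠ 0) := by
  subst hA
  have h1 : Matrix.trace (!![l, 0; k, l] : Matrix (Fin 2) (Fin 2) ℝ) = 2 * l := by
    simp [Matrix.trace_fin_two]; ring
  have h2 : Matrix.trace ((!![l, 0; k, l] : Matrix (Fin 2) (Fin 2) ℝ) *
      !![l, 0; k, l]) = 2 * l ^ 2 := by
    rw [show (!![l, 0; k, l] : Matrix (Fin 2) (Fin 2) ℝ) * !![l, 0; k, l]
      = !![l*l + 0*k, l*0 + 0*l; k*l + l*k, k*0 + l*l] by
        rw [Matrix.mul_fin_two]]
    simp [Matrix.trace_fin_two]; ring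
  rw [h1, h2]
  have hr' : (3 : ℝ) ≤ (r : ℝ) := by exact_mod_cast hr
  constructor
  · constructor
    · rintro ⟨he, hne⟩
      have hl : l ≠ 0 := by intro h; simp [h] at hne
      have : l ^ 2 * (l ^ 2 - ((r : ℝ) - 1)) = 0 := by nlinarith
      rcases mul_eq_zero.1 this with h | h
      · exact absurd (pow_eq_zero_iff (by norm_num) |>.1 h) hl
      · linarith
    · intro h
      have hl : l ≠ 0 := by
        intro h0; rw [h0] at h; norm_num at h; linarith
      refine ⟨by nlinarith, by simp [hl]⟩
  · rintro ⟨he, hne⟩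
    have hl : l ≠ 0 := by intro h; simp [h] at hne
    have hl2 : 0 < l ^ 2 := by positivity
    nlinarith
end
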